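/- arXiv:1011.4474 — 5 statements merged into one kernel-verified Lean document; each statement's English description precedes it below -/
import Mathlib

section
/- Up to global phase, the GHZ state (|000⟩ − |111⟩)/√2 is the unique unit vector |ψ⟩ ∈ (ℂ²)^⊗3 satisfying (σx⊗σy⊗σy + σy⊗σx⊗σy + σy⊗σy⊗σx − σx⊗σx⊗σx)|ψ⟩ = 4|ψ⟩. -/
/-!
Each of the four Pauli strings flips all three qubits, so the operator only couples a basis
vector |abc⟩ with its complement. The phases cancel on every such pair except {|000⟩, |111⟩},
where the operator acts as −4 times the swap; hence its 4-eigenspace is the line through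
|000⟩ − |111⟩.
-/

open Kronecker Matrix

noncomputable def sigmaX : Matrix (Fin 2) (Fin 2) ℂ := !![0, 1; 1, 0]
noncomputable def sigmaY : Matrix (Fin 2) (Fin 2) ℂ := !![0, -Complex.I; Complex.I, 0]

/-- The three-qubit GHZ state (|000⟩ − |111⟩)/√2. -/
noncomputable def ghz : (Fin 2 × Fin 2) × Fin 2 → ℂ := fun p =>
  if p = ((0, 0), 0) then ((Real.sqrt 2)⁻¹ : ℝ)
  else if p = ((1, 1), 1) then -((Real.sqrt 2)⁻¹ : ℝ)
  else 0

noncomputable def merminOperator :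
    Matrix ((Fin 2 × Fin 2) × Fin 2) ((Fin 2 × Fin 2) × Fin 2) ℂ :=
  sigmaX ⊗ₖ sigmaY ⊗ₖ sigmaY + sigmaY ⊗ₖ sigmaX ⊗ₖ sigmaY +
    sigmaY ⊗ₖ sigmaY ⊗ₖ sigmaX - sigmaX ⊗ₖ sigmaX ⊗ₖ sigmaX

theorem merminOperator_eq :
    merminOperator = single ((0, 0), 0) ((1, 1), 1) (-4) + single ((1, 1), 1) ((0, 0), 0) (-4) := by
  ext ⟨⟨i, j⟩, k⟩ ⟨⟨i', j'⟩, k'⟩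
  fin_cases i <;> fin_cases j <;> fin_cases k <;> fin_cases i' <;> fin_cases j' <;> fin_cases k' <;>
    norm_num [merminOperator, sigmaX, sigmaY, single]

theorem Matrix.eq_smul_sub_single_of_mulVec_eq {ι K : Type*} [Fintype ι] [DecidableEq ι]
    [Field K] {a b : ι} (hab : a ≠ b) {c : K} (hc : c ≠ 0) {ψ : ι → K}
    (h : (single a b (-c) + single b a (-c)) *ᵥ ψ = c • ψ) :
    ψ = ψ a • (Pi.single a 1 - Pi.single b 1) := by
  have hp (p : ι) := congrFun h p
  simp only [add_mulVec, single_mulVec, Pi.add_apply, Pi.smul_apply, smul_eq_mul] at hp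
  have hb : ψ b = -ψ a := mul_left_cancel₀ hc <| by
    linear_combination -(by simpa [hab] using hp a : -(c * ψ b) = c * ψ a)
  ext p
  by_cases hpa : p = a
  · subst hpa; simp [hab]
  by_cases hpb : p = b
  · subst hpb; simp [hb, Ne.symm hab]
  · have : c * ψ p = 0 := by simpa [hpa, hpb] using (hp p).symm
    simpa [hpa, hpb, hc] using this

theorem Complex.norm_eq_one_of_eq_smul {ι : Type*} [Fintype ι] {u v : ι → ℂ} {c : ℂ}
    (hu : ∑ i, normSq (u i) = 1) (hv : ∑ i, normSq (v i) = 1) (h : u = c • v) : ‖c‖ = 1 := by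
  have : normSq c = 1 := by simpa [h, ← Finset.mul_sum, hv] using hu
  rwa [normSq_eq_norm_sq, pow_eq_one_iff_of_nonneg (norm_nonneg c) two_ne_zero] at this

theorem ghz_eq_smul :
    ghz = ((Real.sqrt 2)⁻¹ : ℂ) • (Pi.single ((0, 0), 0) 1 - Pi.single ((1, 1), 1) 1) := by
  ext p
  by_cases h0 : p = ((0, 0), 0)
  · subst h0; simp [ghz]
  by_cases h1 : p = ((1, 1), 1)
  · subst h1; simp [ghz]
  · simp [ghz, h0, h1]

theorem sum_normSq_ghz : ∑ p, Complex.normSq (ghz p) = 1 := by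
  norm_num [ghz, Fintype.sum_prod_type]

/-- Up to global phase, the GHZ state is the unique unit vector ψ in (ℂ²)^⊗3
with (σx⊗σy⊗σy + σy⊗σx⊗σy + σy⊗σy⊗σx − σx⊗σx⊗σx) ψ = 4 ψ. -/
theorem ghz_unique_max_eigenvector (ψ : (Fin 2 × Fin 2) × Fin 2 → ℂ)
    (hnorm : ∑ p, Complex.normSq (ψ p) = 1)
    (heig : (sigmaX ⊗ₖ sigmaY ⊗ₖ sigmaY + sigmaY ⊗ₖ sigmaX ⊗ₖ sigmaY +
        sigmaY ⊗ₖ sigmaY ⊗ₖ sigmaX - sigmaX ⊗ₖ sigmaX ⊗ₖ sigmaX).mulVec ψ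
        = (4 : ℂ) • ψ) :
    ∃ c : ℂ, ‖c‖ = 1 ∧ ψ = c • ghz := by
  rw [← merminOperator, merminOperator_eq] at heig
  have hψ := eq_smul_sub_single_of_mulVec_eq (by decide) (by norm_num) heig
  have hc : ψ = ((Real.sqrt 2 : ℂ) * ψ ((0, 0), 0)) • ghz := by
    rw [ghz_eq_smul, smul_smul]
    convert hψ using 2
    field_simp
  exact ⟨_, Complex.norm_eq_one_of_eq_smul hnorm sum_normSq_ghz hc, hc⟩
end

section
/- Under the hypotheses of the GHZ eigenvalue equations (P₁⊗P₂⊗P₃|Ψ⟩ = −|Ψ⟩ and Q₁⊗Q₂⊗P₃|Ψ⟩ = Q₁⊗P₂⊗Q₃|Ψ⟩ = P₁⊗Q₂⊗Q₃|Ψ⟩ = |Ψ⟩, with P_i² = Q_i² = I self-adjoint), the state satisfies (i[P₁,Q₁] ⊗ i[P₂,Q₂] ⊗ I + i[P₁,Q₁] ⊗ I ⊗ i[P₃,Q₃] + I ⊗ i[P₂,Q₂] ⊗ i[P₃,Q₃]) |Ψ⟩ = 12|Ψ⟩. -/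
open Kronecker Matrix

private theorem sub_kron {l m n p : Type*} (A B : Matrix l m ℂ) (C : Matrix n p ℂ) :
    (A - B) ⊗ₖ C = A ⊗ₖ C - B ⊗ₖ C := by
  ext ⟨i, j⟩ ⟨k, r⟩
  simp [Matrix.kroneckerMap_apply, Matrix.sub_apply, sub_mul]

private theorem kron_sub {l m n p : Type*} (A : Matrix l m ℂ) (B C : Matrix n p ℂ) :
    A ⊗ₖ (B - C) = A ⊗ₖ B - A ⊗ₖ C := by
  ext ⟨i, j⟩ ⟨k, r⟩
  simp [Matrix.kroneckerMap_apply, Matrix.sub_apply, mul_sub]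

/-- Under the GHZ eigenvalue relations, the state satisfies
(i[P₁,Q₁]⊗i[P₂,Q₂]⊗I + i[P₁,Q₁]⊗I⊗i[P₃,Q₃] + I⊗i[P₂,Q₂]⊗i[P₃,Q₃]) Ψ = 12 Ψ. -/
theorem ghz_commutator_relation {n₁ n₂ n₃ : ℕ}
    (P₁ Q₁ : Matrix (Fin n₁) (Fin n₁) ℂ)
    (P₂ Q₂ : Matrix (Fin n₂) (Fin n₂) ℂ)
    (P₃ Q₃ : Matrix (Fin n₃) (Fin n₃) ℂ)
    (hP₁ : P₁.IsHermitian) (hQ₁ : Q₁.IsHermitian)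
    (hP₂ : P₂.IsHermitian) (hQ₂ : Q₂.IsHermitian)
    (hP₃ : P₃.IsHermitian) (hQ₃ : Q₃.IsHermitian)
    (hP₁sq : P₁ * P₁ = 1) (hQ₁sq : Q₁ * Q₁ = 1)
    (hP₂sq : P₂ * P₂ = 1) (hQ₂sq : Q₂ * Q₂ = 1)
    (hP₃sq : P₃ * P₃ = 1) (hQ₃sq : Q₃ * Q₃ = 1)
    (Ψ : (Fin n₁ × Fin n₂) × Fin n₃ → ℂ)
    (hΨ : ∑ p, Complex.normSq (Ψ p) = 1)
    (h1 : (P₁ ⊗ₖ P₂ ⊗ₖ P₃).mulVec Ψ = -Ψ)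
    (h2 : (Q₁ ⊗ₖ Q₂ ⊗ₖ P₃).mulVec Ψ = Ψ)
    (h3 : (Q₁ ⊗ₖ P₂ ⊗ₖ Q₃).mulVec Ψ = Ψ)
    (h4 : (P₁ ⊗ₖ Q₂ ⊗ₖ Q₃).mulVec Ψ = Ψ) :
    ((Complex.I • (P₁ * Q₁ - Q₁ * P₁)) ⊗ₖ (Complex.I • (P₂ * Q₂ - Q₂ * P₂))
        ⊗ₖ (1 : Matrix (Fin n₃) (Fin n₃) ℂ)
      + (Complex.I • (P₁ * Q₁ - Q₁ * P₁)) ⊗ₖ (1 : Matrix (Fin n₂) (Fin n₂) ℂ)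
        ⊗ₖ (Complex.I • (P₃ * Q₃ - Q₃ * P₃))
      + (1 : Matrix (Fin n₁) (Fin n₁) ℂ) ⊗ₖ (Complex.I • (P₂ * Q₂ - Q₂ * P₂))
        ⊗ₖ (Complex.I • (P₃ * Q₃ - Q₃ * P₃))).mulVec Ψ = (12 : ℂ) • Ψ := by
  have e11 : ((P₁ * Q₁) ⊗ₖ (P₂ * Q₂) ⊗ₖ (1 : Matrix (Fin n₃) (Fin n₃) ℂ)).mulVec Ψ = -Ψ := by
    rw [← hP₃sq, mul_kronecker_mul, mul_kronecker_mul, ← mulVec_mulVec, h2, h1]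
  have e12 : ((Q₁ * P₁) ⊗ₖ (Q₂ * P₂) ⊗ₖ (1 : Matrix (Fin n₃) (Fin n₃) ℂ)).mulVec Ψ = -Ψ := by
    rw [← hP₃sq, mul_kronecker_mul, mul_kronecker_mul, ← mulVec_mulVec, h1, mulVec_neg, h2]
  have e13 : ((P₁ * Q₁) ⊗ₖ (Q₂ * P₂) ⊗ₖ (1 : Matrix (Fin n₃) (Fin n₃) ℂ)).mulVec Ψ = Ψ := by
    rw [← hQ₃sq, mul_kronecker_mul, mul_kronecker_mul, ← mulVec_mulVec, h3, h4]
  have e14 : ((Q₁ * P₁) ⊗ₖ (P₂ * Q₂) ⊗ₖ (1 : Matrix (Fin n₃) (Fin n₃) ℂ)).mulVec Ψ = Ψ := by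
    rw [← hQ₃sq, mul_kronecker_mul, mul_kronecker_mul, ← mulVec_mulVec, h4, h3]
  have e21 : ((P₁ * Q₁) ⊗ₖ (1 : Matrix (Fin n₂) (Fin n₂) ℂ) ⊗ₖ (P₃ * Q₃)).mulVec Ψ = -Ψ := by
    rw [← hP₂sq, mul_kronecker_mul, mul_kronecker_mul, ← mulVec_mulVec, h3, h1]
  have e22 : ((Q₁ * P₁) ⊗ₖ (1 : Matrix (Fin n₂) (Fin n₂) ℂ) ⊗ₖ (Q₃ * P₃)).mulVec Ψ = -Ψ := by
    rw [← hP₂sq, mul_kronecker_mul, mul_kronecker_mul, ← mulVec_mulVec, h1, mulVec_neg, h3]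
  have e23 : ((P₁ * Q₁) ⊗ₖ (1 : Matrix (Fin n₂) (Fin n₂) ℂ) ⊗ₖ (Q₃ * P₃)).mulVec Ψ = Ψ := by
    rw [← hQ₂sq, mul_kronecker_mul, mul_kronecker_mul, ← mulVec_mulVec, h2, h4]
  have e24 : ((Q₁ * P₁) ⊗ₖ (1 : Matrix (Fin n₂) (Fin n₂) ℂ) ⊗ₖ (P₃ * Q₃)).mulVec Ψ = Ψ := by
    rw [← hQ₂sq, mul_kronecker_mul, mul_kronecker_mul, ← mulVec_mulVec, h4, h2]
  have e31 : ((1 : Matrix (Fin n₁) (Fin n₁) ℂ) ⊗ₖ (P₂ * Q₂) ⊗ₖ (P₃ * Q₃)).mulVec Ψ = -Ψ := by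
    rw [← hP₁sq, mul_kronecker_mul, mul_kronecker_mul, ← mulVec_mulVec, h4, h1]
  have e32 : ((1 : Matrix (Fin n₁) (Fin n₁) ℂ) ⊗ₖ (Q₂ * P₂) ⊗ₖ (Q₃ * P₃)).mulVec Ψ = -Ψ := by
    rw [← hP₁sq, mul_kronecker_mul, mul_kronecker_mul, ← mulVec_mulVec, h1, mulVec_neg, h4]
  have e33 : ((1 : Matrix (Fin n₁) (Fin n₁) ℂ) ⊗ₖ (P₂ * Q₂) ⊗ₖ (Q₃ * P₃)).mulVec Ψ = Ψ := by
    rw [← hQ₁sq, mul_kronecker_mul, mul_kronecker_mul, ← mulVec_mulVec, h2, h3]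
  have e34 : ((1 : Matrix (Fin n₁) (Fin n₁) ℂ) ⊗ₖ (Q₂ * P₂) ⊗ₖ (P₃ * Q₃)).mulVec Ψ = Ψ := by
    rw [← hQ₁sq, mul_kronecker_mul, mul_kronecker_mul, ← mulVec_mulVec, h3, h2]
  simp only [smul_kronecker, kronecker_smul, sub_kron, kron_sub, add_mulVec,
    sub_mulVec, smul_mulVec, e11, e12, e13, e14, e21, e22, e23, e24, e31, e32, e33, e34,
    smul_sub, smul_neg, smul_smul, Complex.I_mul_I]
  module
end

section
/- Let P, Q be self-adjoint involutions (P² = Q² = I) on a finite-dimensional Hilbert space and |ψ⟩ a unit vector with i[P,Q]|ψ⟩ = 2|ψ⟩. Then {P,Q}|ψ⟩ = 0, i.e., (PQ + QP)|ψ⟩ = 0. -/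
open Matrix

/-- If a unit vector ψ attains the maximal eigenvalue 2 of i[P,Q] for
self-adjoint involutions P, Q, then the anticommutator annihilates ψ:
(PQ + QP) ψ = 0. -/
theorem anticommutator_vanishes_on_max_eigenvector {n : ℕ}
    (P Q : Matrix (Fin n) (Fin n) ℂ)
    (hP : P.IsHermitian) (hQ : Q.IsHermitian)
    (hPsq : P * P = 1) (hQsq : Q * Q = 1)
    (ψ : Fin n → ℂ) (hψ : ∑ i, Complex.normSq (ψ i) = 1)
    (heig : (Complex.I • (P * Q - Q * P)).mulVec ψ = (2 : ℂ) • ψ) :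
    (P * Q + Q * P).mulVec ψ = 0 := by
  set B := P * Q + Q * P with hBdef
  set X := P * Q - Q * P with hXdef
  have hP2 : ∀ M : Matrix (Fin n) (Fin n) ℂ, P * (P * M) = M := fun M => by
    rw [← mul_assoc, hPsq, one_mul]
  have hQ2 : ∀ M : Matrix (Fin n) (Fin n) ℂ, Q * (Q * M) = M := fun M => by
    rw [← mul_assoc, hQsq, one_mul]
  -- key algebraic identity: B² = X² + 4
  have hkey : B * B = X * X + (4 : ℂ) • (1 : Matrix (Fin n) (Fin n) ℂ) := by
    rw [hBdef, hXdef]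
    have e1 : P * (Q * (Q * P)) = 1 := by rw [hQ2, hPsq]
    have e2 : Q * (P * (P * Q)) = 1 := by rw [hP2, hQsq]
    simp only [mul_add, add_mul, mul_sub, sub_mul, mul_assoc, e1, e2]
    module
  -- eigenvector equation for X
  have hX : X.mulVec ψ = (-2 * Complex.I) • ψ := by
    have h1 : Complex.I • X.mulVec ψ = (2 : ℂ) • ψ := by
      rw [← Matrix.smul_mulVec]; exact heig
    calc X.mulVec ψ = (-Complex.I) • (Complex.I • X.mulVec ψ) := by
          rw [smul_smul]; simp [Complex.I_mul_I]
      _ = (-Complex.I) • ((2 : ℂ) • ψ) := by rw [h1]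
      _ = (-2 * Complex.I) • ψ := by rw [smul_smul]; ring_nf
  -- hence B² ψ = 0
  have hBB : (B * B).mulVec ψ = 0 := by
    rw [hkey, Matrix.add_mulVec, ← Matrix.mulVec_mulVec, hX, Matrix.mulVec_smul, hX,
      smul_smul, Matrix.smul_mulVec, Matrix.one_mulVec]
    have : (-2 * Complex.I) * (-2 * Complex.I) = -4 := by
      have := Complex.I_mul_I; ring_nf; rw [Complex.I_sq]; ring
    rw [this]
    simp [← add_smul]
  -- B is Hermitian
  have hB : B.IsHermitian := by
    rw [Matrix.IsHermitian, hBdef, conjTranspose_add, conjTranspose_mul, conjTranspose_mul,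
      hP.eq, hQ.eq, add_comm]
  -- ⟨Bψ, Bψ⟩ = 0
  have hnorm : star (B.mulVec ψ) ⬝ᵥ B.mulVec ψ = 0 := by
    rw [Matrix.star_mulVec, hB.eq, ← Matrix.dotProduct_mulVec, Matrix.mulVec_mulVec, hBB,
      dotProduct_zero]
  -- conclude Bψ = 0
  have hsum : ∑ i, Complex.normSq (B.mulVec ψ i) = 0 := by
    have : ((∑ i, Complex.normSq (B.mulVec ψ i) : ℝ) : ℂ) = 0 := by
      push_cast
      rw [← hnorm]
      simp [dotProduct, Pi.star_apply, Complex.normSq_eq_conj_mul_self]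
    exact_mod_cast this
  funext i
  have hnn : ∀ i ∈ Finset.univ, (0:ℝ) ≤ Complex.normSq (B.mulVec ψ i) := fun i _ =>
    Complex.normSq_nonneg _
  have := (Finset.sum_eq_zero_iff_of_nonneg hnn).mp hsum i (Finset.mem_univ i)
  simpa using Complex.normSq_eq_zero.mp this
end

section
/- In the k-th Pagonis–Redhead–Clifton generalization of the GHZ test with n = 4k−1 devices, no assignment of values p₁,…,p_n, q₁,…,q_n ∈ {+1,−1} can simultaneously satisfy all n conditions of the form (Π_{j≠i} q_j)·p_i = +1 for i = 1,…,n together with p₁p₂⋯p_n = −1. -/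
/-- Classical impossibility of the k-th Pagonis–Redhead–Clifton generalization
of the GHZ test, with n = 4k−1 devices. -/
theorem prc_no_classical_assignment (k : ℕ) (hk : 1 ≤ k) :
    ¬ ∃ p q : Fin (4 * k - 1) → ℤ,
      (∀ i, p i = 1 ∨ p i = -1) ∧ (∀ i, q i = 1 ∨ q i = -1) ∧
      (∀ i, (∏ j ∈ Finset.univ.erase i, q j) * p i = 1) ∧
      (∏ i, p i) = -1 := by
  rintro ⟨p, q, hp, hq, hcond, hP⟩
  set Q : ℤ := ∏ i, q i with hQ
  have hq2 : ∀ i, q i * q i = 1 := fun i => by rcases hq i with h | h <;> rw [h] <;> ring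
  have herase : ∀ i, ∏ j ∈ Finset.univ.erase i, q j = Q * q i := by
    intro i
    have h := Finset.prod_erase_mul Finset.univ q (Finset.mem_univ i)
    calc ∏ j ∈ Finset.univ.erase i, q j
        = (∏ j ∈ Finset.univ.erase i, q j) * (q i * q i) := by rw [hq2]; ring
      _ = ((∏ j ∈ Finset.univ.erase i, q j) * q i) * q i := by ring
      _ = Q * q i := by rw [h]
  have key : ∏ i, ((∏ j ∈ Finset.univ.erase i, q j) * p i) = 1 :=
    Finset.prod_eq_one (fun i _ => hcond i)
  rw [Finset.prod_congr rfl (fun i _ => by rw [herase i])] at key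
  have hexp : ∏ i, (Q * q i * p i) = Q ^ (4 * k - 1) * Q * ∏ i, p i := by
    rw [Finset.prod_mul_distrib, Finset.prod_mul_distrib, Finset.prod_const,
      Finset.card_univ, Fintype.card_fin, ← hQ]
  rw [hexp, hP] at key
  have hQ2 : Q * Q = 1 := by
    rw [hQ, ← Finset.prod_mul_distrib]
    exact Finset.prod_eq_one (fun i _ => hq2 i)
  have hQpow : Q ^ (4 * k - 1) * Q = 1 := by
    have h1 : Q ^ (4 * k - 1) * Q = Q ^ (4 * k) := by
      rw [← pow_succ]
      congr 1
      omega
    have h2 : Q ^ (4 * k) = (Q * Q) ^ (2 * k) := by rw [← pow_two]; rw [← pow_mul]; congr 1; ring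
    rw [h1, h2, hQ2, one_pow]
  rw [hQpow] at key
  norm_num at key
end

section
/- For n = 4k−1, any deterministic assignment p_i, q_i ∈ {+1,−1} (i = 1,…,n) satisfies at most 4k−1 of the 4k PRC test conditions; hence if one of the 4k tests is chosen uniformly at random, a deterministic strategy passes with probability at most (4k−1)/(4k). -/
open Classical in
/-- Any deterministic ±1 strategy satisfies at most 4k−1 of the 4k PRC test
conditions; hence it passes a uniformly chosen test with probability at most
(4k−1)/(4k).  The conditions are indexed by `Option (Fin (4k−1))`: `some i` is
the condition with `p` in slot `i` and `q` elsewhere, and `none` is the all-`p`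
condition. -/
theorem prc_at_most_all_but_one (k : ℕ) (hk : 1 ≤ k)
    (p q : Fin (4 * k - 1) → ℤ)
    (hp : ∀ i, p i = 1 ∨ p i = -1) (hq : ∀ i, q i = 1 ∨ q i = -1) :
    (Finset.univ.filter (fun c : Option (Fin (4 * k - 1)) =>
        match c with
        | some i => (∏ j ∈ Finset.univ.erase i, q j) * p i = 1
        | none => (∏ i, p i) = -1)).card ≤ 4 * k - 1 ∧
    ((Finset.univ.filter (fun c : Option (Fin (4 * k - 1)) =>
        match c with
        | some i => (∏ j ∈ Finset.univ.erase i, q j) * p i = 1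
        | none => (∏ i, p i) = -1)).card : ℚ) / (4 * k) ≤ (4 * k - 1) / (4 * k) := by
  set S := Finset.univ.filter (fun c : Option (Fin (4 * k - 1)) =>
        match c with
        | some i => (∏ j ∈ Finset.univ.erase i, q j) * p i = 1
        | none => (∏ i, p i) = -1) with hS
  have hQ2 : (∏ i, q i) * (∏ i, q i) = 1 := by
    rw [← Finset.prod_mul_distrib]
    apply Finset.prod_eq_one
    intro i _
    rcases hq i with h | h <;> rw [h] <;> ring
  have key : ¬ ((∀ i, (∏ j ∈ Finset.univ.erase i, q j) * p i = 1) ∧ (∏ i, p i) = -1) := by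
    rintro ⟨hall, hP⟩
    have h1 : ∀ i : Fin (4 * k - 1), (q i * ∏ j, q j) * p i = 1 := by
      intro i
      have hme := Finset.mul_prod_erase Finset.univ q (Finset.mem_univ i)
      have hi := hall i
      have hqi : q i * q i = 1 := by rcases hq i with h | h <;> rw [h] <;> ring
      calc (q i * ∏ j, q j) * p i
          = (q i * (q i * ∏ j ∈ Finset.univ.erase i, q j)) * p i := by rw [hme]
        _ = (q i * q i) * ((∏ j ∈ Finset.univ.erase i, q j) * p i) := by ring
        _ = 1 := by rw [hqi, hi]; ring
    have h2 : ∏ i : Fin (4 * k - 1), ((q i * ∏ j, q j) * p i) = 1 :=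
      Finset.prod_eq_one (fun i _ => h1 i)
    rw [Finset.prod_mul_distrib, Finset.prod_mul_distrib, Finset.prod_const, hP] at h2
    simp only [Finset.card_univ, Fintype.card_fin] at h2
    have hpow : (∏ j, q j) * (∏ j, q j) ^ (4 * k - 1) = 1 := by
      have he : 4 * k - 1 + 1 = 2 * (2 * k) := by omega
      calc (∏ j, q j) * (∏ j, q j) ^ (4 * k - 1)
          = (∏ j, q j) ^ (4 * k - 1 + 1) := by rw [pow_succ]; ring
        _ = ((∏ j, q j) ^ 2) ^ (2 * k) := by rw [he, pow_mul]
        _ = 1 := by rw [sq, hQ2, one_pow]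
      
    rw [show ((∏ i, q i) * (∏ j, q j) ^ (4 * k - 1)) * (-1 : ℤ)
        = -((∏ i, q i) * (∏ j, q j) ^ (4 * k - 1)) by ring, hpow] at h2
    omega
  have hcard : S.card ≤ 4 * k - 1 := by
    by_contra h
    push_neg at h
    have hle : S.card ≤ 4 * k := by
      calc S.card ≤ Fintype.card (Option (Fin (4 * k - 1))) := Finset.card_le_univ S
        _ = 4 * k := by rw [Fintype.card_option, Fintype.card_fin]; omega
    have heq : S.card = Fintype.card (Option (Fin (4 * k - 1))) := by
      rw [Fintype.card_option, Fintype.card_fin]; omega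
    have hSu : S = Finset.univ := Finset.eq_univ_of_card S heq
    have hall : ∀ c, c ∈ S := fun c => hSu ▸ Finset.mem_univ c
    apply key
    constructor
    · intro i
      have := hall (some i)
      rw [hS, Finset.mem_filter] at this
      exact this.2
    · have := hall none
      rw [hS, Finset.mem_filter] at this
      exact this.2
  refine ⟨hcard, ?_⟩
  have hd : (0 : ℚ) < 4 * k := by positivity
  rw [div_le_div_iff_of_pos_right hd]
  have : (S.card : ℚ) ≤ ((4 * k - 1 : ℕ) : ℚ) := by exact_mod_cast hcard
  calc (S.card : ℚ) ≤ ((4 * k - 1 : ℕ) : ℚ) := this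
    _ = 4 * k - 1 := by
        have : (4 * k - 1 : ℕ) = 4 * k - 1 := rfl
        push_cast [Nat.cast_sub (by omega : 1 ≤ 4 * k)]
        ring
end
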